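/- Let Γ̂ : ℝ^p → ℝ be convex and differentiable, θ̃ ∈ ℝ^p with support S̃, |S̃| = s̃, and λ > 0 with 2‖∇Γ̂(θ̃)‖_∞ ≤ λ. Suppose the first-order Taylor error δΓ̂(Δ) = Γ̂(θ̃+Δ) − Γ̂(θ̃) − ⟨∇Γ̂(θ̃), Δ⟩ satisfies δΓ̂(Δ) ≥ κ‖Δ‖₂² for all Δ in the cone C = {Δ : ‖Δ_{S̃ᶜ}‖₁ ≤ 3‖Δ_{S̃}‖₁} with ‖Δ‖₂ ≤ r, for some κ > 0. If λ ≤ κ r /(3√s̃) and θ̂ minimizes Γ̂(θ) + λ‖θ‖₁, then ‖θ̂ − θ̃‖₂² ≤ 9 s̃ λ² / κ². -/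

import Mathlib

open Finset

/-!
Write `Δ = θ̂ - θ̃`. Minimality of `θ̂` for the penalised objective, the gradient inequality of
the convex loss and `2‖∇Γ̂(θ̃)‖_∞ ≤ λ` put `Δ` in the cone `‖Δ_{S̃ᶜ}‖₁ ≤ 3‖Δ_{S̃}‖₁` and bound
the Taylor remainder by `δΓ̂(Δ) ≤ (3/2) λ ‖Δ_{S̃}‖₁ ≤ (3/2) λ √s̃ ‖Δ‖₂`. Restricted strong
convexity only holds on the ball of radius `r`; but `δΓ̂` is convex and vanishes at `0`, so
`δΓ̂(tΔ) ≤ t δΓ̂(Δ)` for `t ∈ [0, 1]`, and scaling `Δ` back to the sphere of radius `r` shows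
that `‖Δ‖₂ > r` would force `κ r ≤ (3/2) λ √s̃`, contradicting the choice of `λ`.
Inside the ball, `κ ‖Δ‖₂² ≤ (3/2) λ √s̃ ‖Δ‖₂` gives the bound.
-/

theorem ConvexOn.map_sub_le_of_hasFDerivAt {F : Type*} [NormedAddCommGroup F] [NormedSpace ℝ F]
    {f : F → ℝ} {f' : F →L[ℝ] ℝ} {x : F} (hf : ConvexOn ℝ Set.univ f) (hx : HasFDerivAt f f' x)
    (v : F) : f' v ≤ f (x + v) - f x := by
  have hline : ConvexOn ℝ Set.univ fun t : ℝ => f (x + t • v) := by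
    simpa [Function.comp_def, AffineMap.lineMap_apply, add_comm] using
      hf.comp_affineMap (AffineMap.lineMap x (x + v))
  have hderiv : HasDerivAt (fun t : ℝ => f (x + t • v)) (f' v) 0 := by
    have hpath : HasDerivAt (fun t : ℝ => x + t • v) v 0 := by
      simpa using ((hasDerivAt_id (0 : ℝ)).smul_const v).const_add x
    exact (by simpa using hx : HasFDerivAt f f' (x + (0 : ℝ) • v)).comp_hasDerivAt 0 hpath
  simpa [slope_def_field] using
    hline.le_slope_of_hasDerivAt (Set.mem_univ 0) (Set.mem_univ 1) one_pos hderiv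

theorem ConvexOn.map_smul_le {F : Type*} [AddCommGroup F] [Module ℝ F] {f : F → ℝ}
    (hf : ConvexOn ℝ Set.univ f) (hf0 : f 0 ≤ 0) (v : F) {t : ℝ} (ht : t ∈ Set.Icc (0 : ℝ) 1) :
    f (t • v) ≤ t * f v := by
  have := hf.2 (Set.mem_univ v) (Set.mem_univ 0) ht.1 (sub_nonneg.2 ht.2) (add_sub_cancel t 1)
  simp only [smul_zero, add_zero, smul_eq_mul] at this
  nlinarith [ht.2]

section TaylorRemainder

variable {E : Type*} [NormedAddCommGroup E] [InnerProductSpace ℝ E]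

def taylorRemainder (f : E → ℝ) (g x v : E) : ℝ :=
  f (x + v) - f x - inner ℝ g v

@[simp]
theorem taylorRemainder_zero (f : E → ℝ) (g x : E) : taylorRemainder f g x 0 = 0 := by
  simp [taylorRemainder]

theorem taylorRemainder_nonneg [CompleteSpace E] {f : E → ℝ} {g x : E}
    (hf : ConvexOn ℝ Set.univ f) (hg : HasGradientAt f g x) (v : E) :
    0 ≤ taylorRemainder f g x v := by
  have := hf.map_sub_le_of_hasFDerivAt hg.hasFDerivAt v
  rw [InnerProductSpace.toDual_apply_apply] at this
  unfold taylorRemainder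
  linarith

theorem convexOn_taylorRemainder {f : E → ℝ} (hf : ConvexOn ℝ Set.univ f) (g x : E) :
    ConvexOn ℝ Set.univ (taylorRemainder f g x) := by
  have hsplit : taylorRemainder f g x = (f ∘ (x + ·)) - ⇑(innerₛₗ ℝ g) + fun _ ↦ -f x := by
    funext v
    simp only [taylorRemainder, Pi.add_apply, Pi.sub_apply, Function.comp_apply,
      innerₛₗ_apply_apply]
    ring
  rw [hsplit]
  exact ((hf.translate_right x).sub ((innerₛₗ ℝ g).concaveOn convex_univ)).add_const (-f x)

end TaylorRemainder

theorem mul_norm_le_of_localized_curvature {F : Type*} [NormedAddCommGroup F] [NormedSpace ℝ F]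
    {f : F → ℝ} {v : F} {κ r c : ℝ} (hf : ConvexOn ℝ Set.univ f) (hf0 : f 0 ≤ 0) (hκ : 0 < κ)
    (hc : 0 ≤ c) (hcr : c < κ * r)
    (hcurv : ∀ t : ℝ, 0 < t → ‖t • v‖ ≤ r → κ * ‖t • v‖ ^ 2 ≤ f (t • v))
    (hup : f v ≤ c * ‖v‖) : κ * ‖v‖ ≤ c := by
  rcases le_or_gt ‖v‖ r with hvr | hrv
  · rcases (norm_nonneg v).eq_or_lt with hv0 | hvpos
    · rw [← hv0, mul_zero]; exact hc
    · have := hcurv 1 one_pos (by simpa using hvr)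
      rw [one_smul] at this
      nlinarith
  · exfalso
    have hr : 0 < r := pos_of_mul_pos_right (hc.trans_lt hcr) hκ.le
    have hvpos : 0 < ‖v‖ := hr.trans hrv
    set t := r / ‖v‖
    have htv : t * ‖v‖ = r := div_mul_cancel₀ r hvpos.ne'
    have ht0 : 0 < t := div_pos hr hvpos
    have hnorm : ‖t • v‖ = r := by rw [norm_smul, Real.norm_of_nonneg ht0.le, htv]
    have hlow := hcurv t ht0 hnorm.le
    have hscale := hf.map_smul_le hf0 v ⟨ht0.le, ((div_lt_one hvpos).2 hrv).le⟩
    rw [hnorm] at hlow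
    have : κ * r ^ 2 ≤ c * r := by nlinarith
    nlinarith

section EuclideanL1

variable {ι : Type*}

theorem sum_abs_smul (s : Finset ι) (t : ℝ) (v : EuclideanSpace ℝ ι) :
    ∑ k ∈ s, |(t • v) k| = |t| * ∑ k ∈ s, |v k| := by
  simp [mul_sum, abs_mul]

variable [Fintype ι]

theorem abs_inner_le_mul_sum_abs {G : EuclideanSpace ℝ ι} {c : ℝ} (hG : ∀ k, |G k| ≤ c)
    (v : EuclideanSpace ℝ ι) : |inner ℝ G v| ≤ c * ∑ k, |v k| := by
  rw [PiLp.inner_apply, mul_sum]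
  refine (abs_sum_le_sum_abs _ _).trans (sum_le_sum fun k _ ↦ ?_)
  rw [RCLike.inner_apply, conj_trivial, abs_mul, mul_comm]
  exact mul_le_mul_of_nonneg_right (hG k) (abs_nonneg _)

theorem sum_abs_le_sqrt_card_mul_norm (s : Finset ι) (v : EuclideanSpace ℝ ι) :
    ∑ k ∈ s, |v k| ≤ √(#s : ℝ) * ‖v‖ := by
  have hsq : (∑ k ∈ s, |v k|) ^ 2 ≤ #s * ‖v‖ ^ 2 := by
    calc (∑ k ∈ s, |v k|) ^ 2 ≤ #s * ∑ k ∈ s, |v k| ^ 2 :=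
        sq_sum_le_card_mul_sum_sq (s := s) (f := fun k ↦ |v k|)
      _ ≤ #s * ∑ k, |v k| ^ 2 := by
        gcongr
        exact subset_univ s
      _ = #s * ‖v‖ ^ 2 := by simp [EuclideanSpace.norm_sq_eq]
  rw [← Real.sqrt_sq (sum_nonneg fun k _ ↦ abs_nonneg (v k)), ← Real.sqrt_sq (norm_nonneg v),
    ← Real.sqrt_mul (Nat.cast_nonneg _)]
  exact Real.sqrt_le_sqrt hsq

theorem sum_abs_sub_sum_abs_add_le [DecidableEq ι] {θ : EuclideanSpace ℝ ι} {S : Finset ι}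
    (hθ : ∀ k, k ∉ S → θ k = 0) (v : EuclideanSpace ℝ ι) :
    ∑ k, |θ k| - ∑ k, |(θ + v) k| ≤ ∑ k ∈ S, |v k| - ∑ k ∈ Sᶜ, |v k| := by
  rw [← sum_sub_distrib, ← sum_add_sum_compl S, sub_eq_add_neg _ (∑ k ∈ Sᶜ, _),
    ← sum_neg_distrib]
  gcongr with k hk k hk
  · calc |θ k| - |(θ + v) k| ≤ |θ k - (θ + v) k| := abs_sub_abs_le_abs_sub _ _
      _ = |v k| := by simp
  · simp [hθ k (mem_compl.1 hk)]

end EuclideanL1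

theorem lasso_mem_cone_and_taylorRemainder_le {ι : Type*} [Fintype ι] [DecidableEq ι]
    {Γ : EuclideanSpace ℝ ι → ℝ} {G θ v : EuclideanSpace ℝ ι} {S : Finset ι} {lam : ℝ}
    (hconv : ConvexOn ℝ Set.univ Γ) (hgrad : HasGradientAt Γ G θ) (hθ : ∀ k, k ∉ S → θ k = 0)
    (hlam : 0 < lam) (hpert : ∀ k, 2 * |G k| ≤ lam)
    (hmin : Γ (θ + v) + lam * ∑ k, |(θ + v) k| ≤ Γ θ + lam * ∑ k, |θ k|) :
    ∑ k ∈ Sᶜ, |v k| ≤ 3 * ∑ k ∈ S, |v k| ∧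
      taylorRemainder Γ G θ v ≤ 3 / 2 * lam * ∑ k ∈ S, |v k| := by
  have hinner := neg_abs_le (inner ℝ G v)
  have hdual := abs_inner_le_mul_sum_abs (G := G) (c := lam / 2) (fun k ↦ by linarith [hpert k]) v
  rw [← sum_add_sum_compl S] at hdual
  have hl1 := mul_le_mul_of_nonneg_left (sum_abs_sub_sum_abs_add_le hθ v) hlam.le
  have hrem := taylorRemainder_nonneg hconv hgrad v
  unfold taylorRemainder at hrem ⊢
  refine ⟨?_, by nlinarith [sum_nonneg fun k (_ : k ∈ Sᶜ) ↦ abs_nonneg (v k)]⟩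
  have : lam * ∑ k ∈ Sᶜ, |v k| ≤ lam * (3 * ∑ k ∈ S, |v k|) := by nlinarith
  exact le_of_mul_le_mul_left this hlam

theorem stmt_1_general {p : ℕ} (Γ : EuclideanSpace ℝ (Fin p) → ℝ)
    (G θt θh : EuclideanSpace ℝ (Fin p)) (S : Finset (Fin p)) (lam κ r : ℝ)
    (hconv : ConvexOn ℝ Set.univ Γ)
    (hgrad : HasGradientAt Γ G θt)
    (hsupp : ∀ k, k ∉ S → θt k = 0)
    (hlam : 0 < lam) (hκ : 0 < κ)
    (hpert : ∀ k, 2 * |G k| ≤ lam)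
    (hRSC : ∀ Δ : EuclideanSpace ℝ (Fin p),
      (∑ k ∈ Sᶜ, |Δ k| ≤ 3 * ∑ k ∈ S, |Δ k|) → ‖Δ‖ ≤ r →
      κ * ‖Δ‖ ^ 2 ≤ Γ (θt + Δ) - Γ θt - (inner ℝ G Δ : ℝ))
    (hlam2 : lam ≤ κ * r / (3 * Real.sqrt S.card))
    (hmin : ∀ θ : EuclideanSpace ℝ (Fin p),
      Γ θh + lam * ∑ k, |θh k| ≤ Γ θ + lam * ∑ k, |θ k|) :
    ‖θh - θt‖ ^ 2 ≤ 9 * S.card * lam ^ 2 / κ ^ 2 := by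
  set Δ := θh - θt
  obtain ⟨hcone, hrem⟩ := lasso_mem_cone_and_taylorRemainder_le (v := Δ) hconv hgrad hsupp hlam
    hpert (by simpa [Δ] using hmin θt)
  -- `κ r / 0 = 0`, so `hlam2` also rules out an empty support.
  have hs : 0 < √(S.card : ℝ) := by
    by_contra! h
    rw [le_antisymm h (Real.sqrt_nonneg _), mul_zero, div_zero] at hlam2
    linarith
  set c := 3 / 2 * lam * √(S.card : ℝ) with hc
  have hcr : c < κ * r := by
    rw [le_div_iff₀ (by positivity)] at hlam2
    linarith [mul_pos hlam hs]
  have hnorm : κ * ‖Δ‖ ≤ c := by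
    refine mul_norm_le_of_localized_curvature (convexOn_taylorRemainder hconv G θt)
      (taylorRemainder_zero Γ G θt).le hκ (by positivity) hcr (fun t ht htr ↦ hRSC _ ?_ htr) ?_
    · simpa only [sum_abs_smul, abs_of_pos ht, mul_left_comm (3 : ℝ)] using
        mul_le_mul_of_nonneg_left hcone ht.le
    · calc taylorRemainder Γ G θt Δ ≤ 3 / 2 * lam * ∑ k ∈ S, |Δ k| := hrem
        _ ≤ 3 / 2 * lam * (√(S.card : ℝ) * ‖Δ‖) := by
          gcongr
          exact sum_abs_le_sqrt_card_mul_norm S Δ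
        _ = c * ‖Δ‖ := by rw [hc]; ring
  rw [le_div_iff₀ (by positivity)]
  calc ‖Δ‖ ^ 2 * κ ^ 2 = (κ * ‖Δ‖) ^ 2 := by ring
    _ ≤ c ^ 2 := pow_le_pow_left₀ (by positivity) hnorm 2
    _ = 9 / 4 * S.card * lam ^ 2 := by rw [hc, mul_pow, Real.sq_sqrt (Nat.cast_nonneg _)]; ring
    _ ≤ 9 * S.card * lam ^ 2 := by gcongr; norm_num

/-- deterministic oracle inequality for ℓ₁-regularized M-estimation. -/
theorem stmt_1 {p : ℕ} (Γ : EuclideanSpace ℝ (Fin p) → ℝ)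
    (G θt θh : EuclideanSpace ℝ (Fin p)) (S : Finset (Fin p)) (lam κ r : ℝ)
    (hconv : ConvexOn ℝ Set.univ Γ) (hdiff : Differentiable ℝ Γ)
    (hgrad : HasGradientAt Γ G θt)
    (hsupp : ∀ k, k ∉ S → θt k = 0)
    (hlam : 0 < lam) (hκ : 0 < κ) (hr : 0 < r)
    (hpert : ∀ k, 2 * |G k| ≤ lam)
    (hRSC : ∀ Δ : EuclideanSpace ℝ (Fin p),
      (∑ k ∈ Sᶜ, |Δ k| ≤ 3 * ∑ k ∈ S, |Δ k|) → ‖Δ‖ ≤ r →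
      κ * ‖Δ‖ ^ 2 ≤ Γ (θt + Δ) - Γ θt - (inner ℝ G Δ : ℝ))
    (hlam2 : lam ≤ κ * r / (3 * Real.sqrt S.card))
    (hmin : ∀ θ : EuclideanSpace ℝ (Fin p),
      Γ θh + lam * ∑ k, |θh k| ≤ Γ θ + lam * ∑ k, |θ k|) :
    ‖θh - θt‖ ^ 2 ≤ 9 * S.card * lam ^ 2 / κ ^ 2 :=
  stmt_1_general Γ G θt θh S lam κ r hconv hgrad hsupp hlam hκ hpert hRSC hlam2 hmin
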